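/- Let (V, ⋄) be a real algebra satisfying the left skew-symmetric identity (X⋄Y)⋄Z − X⋄(Y⋄Z) = −(Y⋄X)⋄Z + Y⋄(X⋄Z) for all X, Y, Z. Then the operation X•Y := X⋄Y + Y⋄X defines a Jordan algebra structure on V, i.e., • is commutative and satisfies X•((X•X)•Y) = (X•X)•(X•Y) for all X, Y. -/

import Mathlib

/-! Writing `L_X` for left multiplication, left skew-symmetry says exactly that
`L_{X•Y} = L_X L_Y + L_Y L_X`. In particular `L_{X•X} = 2 L_X²` commutes with `L_X`, and
`(X•X)⋄X = X⋄(X•X)`; expanding both sides of the Jordan identity and applying the first formula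
to `(X•X)•Y` and to `X•Y` matches them term by term. No division by 2 is needed. -/

namespace LinearMap

variable {R V : Type*} [CommSemiring R] [AddCommGroup V] [Module R V]
  {mul : V →ₗ[R] V →ₗ[R] V}

theorem add_flip_apply_apply (X Y : V) :
    (mul + mul.flip) X Y = mul X Y + mul Y X := rfl

variable (lssa : ∀ X Y Z : V,
  mul (mul X Y) Z - mul X (mul Y Z) = -(mul (mul Y X) Z) + mul Y (mul X Z))
include lssa

theorem mul_add_flip_of_leftSkewSymm (X Y Z : V) :
    mul ((mul + mul.flip) X Y) Z = mul X (mul Y Z) + mul Y (mul X Z) := by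
  have h := lssa X Y Z
  rw [sub_eq_iff_eq_add] at h
  rw [add_flip_apply_apply, map_add, add_apply, h]
  abel

theorem mul_mul_add_flip_self_comm (X Z : V) :
    mul X (mul ((mul + mul.flip) X X) Z) = mul ((mul + mul.flip) X X) (mul X Z) := by
  rw [mul_add_flip_of_leftSkewSymm lssa, mul_add_flip_of_leftSkewSymm lssa, map_add]

theorem mul_add_flip_self_comm (X : V) :
    mul ((mul + mul.flip) X X) X = mul X ((mul + mul.flip) X X) := by
  rw [mul_add_flip_of_leftSkewSymm lssa, add_flip_apply_apply, map_add]

theorem add_flip_jordan_of_leftSkewSymm (X Y : V) :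
    (mul + mul.flip) X ((mul + mul.flip) ((mul + mul.flip) X X) Y) =
      (mul + mul.flip) ((mul + mul.flip) X X) ((mul + mul.flip) X Y) := by
  set q := (mul + mul.flip) X X
  calc (mul + mul.flip) X ((mul + mul.flip) q Y)
      = mul X (mul q Y) + mul X (mul Y q) + mul ((mul + mul.flip) q Y) X := by
        rw [add_flip_apply_apply X, add_flip_apply_apply q, map_add]
    _ = mul q (mul X Y) + mul q (mul Y X) + mul ((mul + mul.flip) X Y) q := by
        rw [mul_add_flip_of_leftSkewSymm lssa q, mul_add_flip_of_leftSkewSymm lssa X Y,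
          mul_mul_add_flip_self_comm lssa, mul_add_flip_self_comm lssa]
        abel
    _ = (mul + mul.flip) q ((mul + mul.flip) X Y) := by
        rw [add_flip_apply_apply q, add_flip_apply_apply X Y, map_add (mul q)]

end LinearMap

/-- If (V, ⋄) is a left skew-symmetric real algebra, then
X•Y := X⋄Y + Y⋄X defines a Jordan algebra structure on V. -/
theorem lssa_gives_jordan {V : Type*} [AddCommGroup V] [Module ℝ V]
    (mul : V →ₗ[ℝ] V →ₗ[ℝ] V)
    (lssa : ∀ X Y Z : V,
      mul (mul X Y) Z - mul X (mul Y Z) = -(mul (mul Y X) Z) + mul Y (mul X Z))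
    (B : V → V → V) (hB : ∀ X Y, B X Y = mul X Y + mul Y X) :
    (∀ X Y : V, B X Y = B Y X) ∧
    (∀ X Y : V, B X (B (B X X) Y) = B (B X X) (B X Y)) := by
  obtain rfl : B = fun X Y => (mul + mul.flip) X Y := funext₂ hB
  exact ⟨fun X Y => add_comm _ _, LinearMap.add_flip_jordan_of_leftSkewSymm lssa⟩
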